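/- If f, g : [0,1] → ℝ are strictly concave and a_0 ≠ a_1 are their respective unique maximizers, then sup_a (f(a) + g(a)) < sup_a f(a) + sup_a g(a). Consequently, for a periodic channel with two amplitude-damping branches whose Holevo quantities χ_0, χ_1 are strictly concave in the state parameter with distinct maximizers, the strict inequality C_p < C̄_p holds. -/

import Mathlib

section Aux

open Set

/-- A concave function with a max at `a₀` is antitone to the right of `a₀`. -/
lemma concave_anti_right {f : ℝ → ℝ} (hf : ConcaveOn ℝ (Icc (0:ℝ) 1) f)
    {a₀ : ℝ} (ha₀ : a₀ ∈ Icc (0:ℝ) 1) (hmax : IsMaxOn f (Icc (0:ℝ) 1) a₀)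
    {x y : ℝ} (hx : x ∈ Icc (0:ℝ) 1) (hy : y ∈ Icc (0:ℝ) 1)
    (h1 : a₀ ≤ x) (h2 : x ≤ y) : f y ≤ f x := by
  rcases eq_or_lt_of_le (h1.trans h2) with h | h
  · have : x = y := le_antisymm h2 (h ▸ h1)
    exact this ▸ le_rfl
  · have hya : 0 < y - a₀ := by linarith
    have htn : (0:ℝ) ≤ (y - x) / (y - a₀) := div_nonneg (by linarith) hya.le
    have hsn : (0:ℝ) ≤ (x - a₀) / (y - a₀) := div_nonneg (by linarith) hya.le
    have hts : (y - x) / (y - a₀) + (x - a₀) / (y - a₀) = 1 := by field_simp; ring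
    have hcomb : ((y - x) / (y - a₀)) • a₀ + ((x - a₀) / (y - a₀)) • y = x := by
      rw [smul_eq_mul, smul_eq_mul]; field_simp; ring
    have h5 := hf.2 ha₀ hy htn hsn hts
    rw [hcomb] at h5
    simp only [smul_eq_mul] at h5
    have hfy : f y ≤ f a₀ := hmax hy
    have h6 : ((y - x) / (y - a₀)) * f y ≤ ((y - x) / (y - a₀)) * f a₀ :=
      mul_le_mul_of_nonneg_left hfy htn
    have h7 : f y = ((y - x) / (y - a₀)) * f y + ((x - a₀) / (y - a₀)) * f y := by
      rw [← add_mul, hts, one_mul]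
    linarith

/-- A concave function with a max at `a₁` is monotone to the left of `a₁`. -/
lemma concave_mono_left {f : ℝ → ℝ} (hf : ConcaveOn ℝ (Icc (0:ℝ) 1) f)
    {a₁ : ℝ} (ha₁ : a₁ ∈ Icc (0:ℝ) 1) (hmax : IsMaxOn f (Icc (0:ℝ) 1) a₁)
    {x y : ℝ} (hx : x ∈ Icc (0:ℝ) 1) (hy : y ∈ Icc (0:ℝ) 1)
    (h1 : x ≤ y) (h2 : y ≤ a₁) : f x ≤ f y := by
  rcases eq_or_lt_of_le (h1.trans h2) with h | h
  · have : x = y := le_antisymm h1 (h ▸ h2)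
    exact this ▸ le_rfl
  · have hya : 0 < a₁ - x := by linarith
    have htn : (0:ℝ) ≤ (a₁ - y) / (a₁ - x) := div_nonneg (by linarith) hya.le
    have hsn : (0:ℝ) ≤ (y - x) / (a₁ - x) := div_nonneg (by linarith) hya.le
    have hts : (a₁ - y) / (a₁ - x) + (y - x) / (a₁ - x) = 1 := by field_simp; ring
    have hcomb : ((a₁ - y) / (a₁ - x)) • x + ((y - x) / (a₁ - x)) • a₁ = y := by
      rw [smul_eq_mul, smul_eq_mul]; field_simp; ring
    have h5 := hf.2 hx ha₁ htn hsn hts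
    rw [hcomb] at h5
    simp only [smul_eq_mul] at h5
    have hfx : f x ≤ f a₁ := hmax hx
    have h6 : ((y - x) / (a₁ - x)) * f x ≤ ((y - x) / (a₁ - x)) * f a₁ :=
      mul_le_mul_of_nonneg_left hfx hsn
    have h7 : f x = ((a₁ - y) / (a₁ - x)) * f x + ((y - x) / (a₁ - x)) * f x := by
      rw [← add_mul, hts, one_mul]
    linarith

/-- Main case: `a₀ < a₁`. -/
lemma main_case (f g : ℝ → ℝ)
    (hf : StrictConcaveOn ℝ (Set.Icc (0 : ℝ) 1) f)
    (hg : StrictConcaveOn ℝ (Set.Icc (0 : ℝ) 1) g)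
    (a₀ a₁ : ℝ) (ha₀ : a₀ ∈ Set.Icc (0 : ℝ) 1) (ha₁ : a₁ ∈ Set.Icc (0 : ℝ) 1)
    (hmax₀ : IsMaxOn f (Set.Icc (0 : ℝ) 1) a₀)
    (hmax₁ : IsMaxOn g (Set.Icc (0 : ℝ) 1) a₁)
    (huniq₀ : ∀ a ∈ Set.Icc (0 : ℝ) 1, IsMaxOn f (Set.Icc (0 : ℝ) 1) a → a = a₀)
    (huniq₁ : ∀ a ∈ Set.Icc (0 : ℝ) 1, IsMaxOn g (Set.Icc (0 : ℝ) 1) a → a = a₁)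
    (hlt : a₀ < a₁) :
    (⨆ a : Set.Icc (0 : ℝ) 1, (f a + g a)) <
      (⨆ a : Set.Icc (0 : ℝ) 1, f a) + ⨆ a : Set.Icc (0 : ℝ) 1, g a := by
  haveI : Nonempty (Set.Icc (0:ℝ) 1) := ⟨⟨0, by norm_num⟩⟩
  set m : ℝ := (a₀ + a₁) / 2 with hm
  have hm0 : a₀ < m := by rw [hm]; linarith
  have hm1 : m < a₁ := by rw [hm]; linarith
  have hmI : m ∈ Icc (0:ℝ) 1 := ⟨le_trans ha₀.1 hm0.le, le_trans hm1.le ha₁.2⟩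
  -- strict drops at m
  have hfm : f m < f a₀ := by
    have h0 : f m ≤ f a₀ := hmax₀ hmI
    rcases h0.lt_or_eq with h | h
    · exact h
    · exfalso
      have : IsMaxOn f (Icc (0:ℝ) 1) m := fun x hx => by
        simp only [Set.mem_setOf_eq] at *
        exact le_trans (hmax₀ hx) h.ge
      exact absurd (huniq₀ m hmI this) hm0.ne'
  have hgm : g m < g a₁ := by
    have h0 : g m ≤ g a₁ := hmax₁ hmI
    rcases h0.lt_or_eq with h | h
    · exact h
    · exfalso
      have : IsMaxOn g (Icc (0:ℝ) 1) m := fun x hx => by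
        simp only [Set.mem_setOf_eq] at *
        exact le_trans (hmax₁ hx) h.ge
      exact absurd (huniq₁ m hmI this) hm1.ne
  -- sups of f and g
  have hbf : BddAbove (Set.range fun a : Icc (0:ℝ) 1 => f a) := by
    refine ⟨f a₀, ?_⟩; rintro _ ⟨a, rfl⟩; exact hmax₀ a.2
  have hbg : BddAbove (Set.range fun a : Icc (0:ℝ) 1 => g a) := by
    refine ⟨g a₁, ?_⟩; rintro _ ⟨a, rfl⟩; exact hmax₁ a.2
  have hfs : (⨆ a : Icc (0:ℝ) 1, f a) = f a₀ :=
    le_antisymm (ciSup_le fun a => hmax₀ a.2) (le_ciSup hbf ⟨a₀, ha₀⟩)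
  have hgs : (⨆ a : Icc (0:ℝ) 1, g a) = g a₁ :=
    le_antisymm (ciSup_le fun a => hmax₁ a.2) (le_ciSup hbg ⟨a₁, ha₁⟩)
  have hsup : (⨆ a : Icc (0:ℝ) 1, (f a + g a)) ≤ max (f m + g a₁) (f a₀ + g m) := by
    refine ciSup_le fun a => ?_
    rcases le_total (a : ℝ) m with h | h
    · refine le_max_of_le_right ?_
      have h1 : f a ≤ f a₀ := hmax₀ a.2
      have h2 : g a ≤ g m := concave_mono_left hg.concaveOn ha₁ hmax₁ a.2 hmI h hm1.le
      linarith
    · refine le_max_of_le_left ?_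
      have h1 : f a ≤ f m := concave_anti_right hf.concaveOn ha₀ hmax₀ hmI a.2 hm0.le h
      have h2 : g a ≤ g a₁ := hmax₁ a.2
      linarith
  have hmaxlt : max (f m + g a₁) (f a₀ + g m) < f a₀ + g a₁ :=
    max_lt (by linarith) (by linarith)
  rw [hfs, hgs]
  exact lt_of_le_of_lt hsup hmaxlt

end Aux

/-- If `f, g` are strictly concave on `[0,1]` with distinct unique maximizers
`a₀ ≠ a₁`, then `sup (f + g) < sup f + sup g`; in particular, for a periodic
channel with two branches whose Holevo quantities are strictly concave with
distinct maximizers, `C_p < C̄_p` holds strictly. -/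
theorem sup_sum_lt_sum_sup (f g : ℝ → ℝ)
    (hf : StrictConcaveOn ℝ (Set.Icc (0 : ℝ) 1) f)
    (hg : StrictConcaveOn ℝ (Set.Icc (0 : ℝ) 1) g)
    (a₀ a₁ : ℝ) (ha₀ : a₀ ∈ Set.Icc (0 : ℝ) 1) (ha₁ : a₁ ∈ Set.Icc (0 : ℝ) 1)
    (hmax₀ : IsMaxOn f (Set.Icc (0 : ℝ) 1) a₀)
    (hmax₁ : IsMaxOn g (Set.Icc (0 : ℝ) 1) a₁)
    (huniq₀ : ∀ a ∈ Set.Icc (0 : ℝ) 1, IsMaxOn f (Set.Icc (0 : ℝ) 1) a → a = a₀)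
    (huniq₁ : ∀ a ∈ Set.Icc (0 : ℝ) 1, IsMaxOn g (Set.Icc (0 : ℝ) 1) a → a = a₁)
    (hne : a₀ ≠ a₁) :
    (⨆ a : Set.Icc (0 : ℝ) 1, (f a + g a)) <
      (⨆ a : Set.Icc (0 : ℝ) 1, f a) + ⨆ a : Set.Icc (0 : ℝ) 1, g a := by
  rcases hne.lt_or_gt with h | h
  · exact main_case f g hf hg a₀ a₁ ha₀ ha₁ hmax₀ hmax₁ huniq₀ huniq₁ h
  · have := main_case g f hg hf a₁ a₀ ha₁ ha₀ hmax₁ hmax₀ huniq₁ huniq₀ h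
    have heq : (⨆ a : Set.Icc (0:ℝ) 1, (f a + g a)) = ⨆ a : Set.Icc (0:ℝ) 1, (g a + f a) := by
      simp_rw [add_comm]
    rw [heq, add_comm]
    exact this
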